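/- Let F, C, I ⊆ X × R model catalysis and inhibition in a chemical reaction system, and define a u-RAF as a RAF R' ⊆ R such that no reaction in R' is inhibited by any molecule type in S(R') (the products of R' together with the food set F). If R₁ is the maximal RAF of (X, R, C, F), R₂ ⊆ R₁ is the set of reactions of R₁ not inhibited by any element of S(R₁), and R₃ is the maximal RAF of (X, R₂, C, F), then whenever R₃ is nonempty, R₃ is a u-RAF of (X, R, C, I, F). -/

import Mathlib

/-- A chemical reaction with a set of reactants and a set of products. -/
structure Reaction (M : Type*) where
  reactants : Finset M
  products : Finset M

/-- `S(R')`: the food set together with all products of reactions in `R'`. -/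
def Sset {M : Type*} (F : Set M) (Rs : Set (Reaction M)) : Set M :=
  F ∪ {x | ∃ r ∈ Rs, x ∈ r.products}

/-- The molecule types generated from the food set `F` using only reactions in `Rs`. -/
inductive generated {M : Type*} (F : Set M) (Rs : Set (Reaction M)) : M → Prop
  | food {x : M} : x ∈ F → generated F Rs x
  | react {r : Reaction M} {x : M} : r ∈ Rs →
      (∀ y ∈ r.reactants, generated F Rs y) → x ∈ r.products → generated F Rs x

/-- A RAF of a CRS with catalysis set `C` and food set `F`: a nonempty set of
reactions, each catalyzed by some molecule type in `S(R')`, and such that every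
reactant of every reaction is generated from `F` using only reactions of `R'`. -/
def IsRAF {M : Type*} (C : Set (M × Reaction M)) (F : Set M)
    (Rs : Set (Reaction M)) : Prop :=
  Rs.Nonempty ∧
    (∀ r ∈ Rs, ∃ x ∈ Sset F Rs, (x, r) ∈ C) ∧
    (∀ r ∈ Rs, ∀ y ∈ r.reactants, generated F Rs y)

/-- An uninhibited RAF (`u`-RAF) with respect to the inhibition set `I`: a RAF none
of whose reactions is inhibited by any molecule type in `S(R')`. -/
def IsURAF {M : Type*} (C I : Set (M × Reaction M)) (F : Set M)
    (Rs : Set (Reaction M)) : Prop :=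
  IsRAF C F Rs ∧ ∀ r ∈ Rs, ∀ x ∈ Sset F Rs, (x, r) ∉ I

def maxRAF {M : Type*} (C : Set (M × Reaction M)) (F : Set M) (R : Set (Reaction M)) :
    Set (Reaction M) :=
  ⋃₀ {R' | R' ⊆ R ∧ IsRAF C F R'}

section

variable {M : Type*} {C : Set (M × Reaction M)} {F : Set M}

lemma Sset_mono {A B : Set (Reaction M)} (h : A ⊆ B) : Sset F A ⊆ Sset F B :=
  Set.union_subset_union_right F fun _ ⟨r, hr, hx⟩ => ⟨r, h hr, hx⟩

lemma generated.mono {A B : Set (Reaction M)} (h : A ⊆ B) {x : M} (hx : generated F A x) :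
    generated F B x := by
  induction hx with
  | food hx => exact .food hx
  | react hr _ hx ih => exact .react (h hr) ih hx

lemma IsRAF.sUnion {S : Set (Set (Reaction M))} (hS : ∀ A ∈ S, IsRAF C F A)
    (hne : (⋃₀ S).Nonempty) : IsRAF C F (⋃₀ S) := by
  refine ⟨hne, ?_, ?_⟩
  · rintro r ⟨A, hA, hr⟩
    obtain ⟨x, hx, hxr⟩ := (hS A hA).2.1 r hr
    exact ⟨x, Sset_mono (Set.subset_sUnion_of_mem hA) hx, hxr⟩
  · rintro r ⟨A, hA, hr⟩ y hy
    exact ((hS A hA).2.2 r hr y hy).mono (Set.subset_sUnion_of_mem hA)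

lemma maxRAF_subset (R : Set (Reaction M)) : maxRAF C F R ⊆ R :=
  Set.sUnion_subset fun _ hA => hA.1

lemma isRAF_maxRAF {R : Set (Reaction M)} (hne : (maxRAF C F R).Nonempty) :
    IsRAF C F (maxRAF C F R) :=
  IsRAF.sUnion (fun _ hA => hA.2) hne

end

/-- Correctness of the iteration algorithm: if `R₁` is the maximal RAF (the union of
all RAFs contained in `R`), `R₂` consists of the reactions of `R₁` not inhibited by
any molecule type in `S(R₁)`, and `R₃` is the maximal RAF contained in `R₂`, then
whenever `R₃` is nonempty it is a `u`-RAF of `(X, R, C, I, F)`. -/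
theorem stmt_19 {M : Type*} (C I : Set (M × Reaction M)) (F : Set M)
    (R R1 R2 R3 : Set (Reaction M))
    (hR1 : R1 = ⋃₀ {R' | R' ⊆ R ∧ IsRAF C F R'})
    (hR2 : R2 = {r ∈ R1 | ∀ x ∈ Sset F R1, (x, r) ∉ I})
    (hR3 : R3 = ⋃₀ {R' | R' ⊆ R2 ∧ IsRAF C F R'})
    (hne : R3.Nonempty) :
    R3 ⊆ R ∧ IsURAF C I F R3 := by
  change R1 = maxRAF C F R at hR1
  change R3 = maxRAF C F R2 at hR3
  subst hR1 hR3
  have h32 : maxRAF C F R2 ⊆ R2 := maxRAF_subset R2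
  have h21 : R2 ⊆ maxRAF C F R := hR2 ▸ fun _ hr => hr.1
  refine ⟨h32.trans (h21.trans (maxRAF_subset R)), isRAF_maxRAF hne, fun r hr x hx => ?_⟩
  -- `S(R₃) ⊆ S(R₁)`, and no reaction of `R₂` is inhibited by `S(R₁)`.
  have hr2 : r ∈ R2 := h32 hr
  rw [hR2] at hr2
  exact hr2.2 x (Sset_mono (h32.trans h21) hx)
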